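/- arXiv:1901.02450 — 3 statements merged into one kernel-verified Lean document; each statement's English description precedes it below -/
import Mathlib

section
/- If a finite set of sporadic sub-tasks on one engine satisfies Σ_v dbf(v, t) ≤ t for all t in [0, L] where L is an upper bound such that for all t > L, Σ_v dbf(v,t) ≤ U·t + B ≤ t with total utilization U = Σ_v C(v)/T(v) < 1 and B = Σ_v C(v)·(1 − D(v)/T(v))... then Σ_v dbf(v,t) ≤ t holds for all t ≥ 0, with L = B/(1−U). -/
open Finset

/-- Bounded-interval dbf test suffices. For a finite set of sporadic
sub-tasks with total utilization `U = Σ C v / T v < 1` and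
`B = Σ C v·(T v − D v)/T v`, if `Σ_v dbf(v,t) ≤ t` holds for all `t ∈ [0, L]` with
`L = B/(1−U)`, then it holds for all `t ≥ 0`. -/
theorem dbf_test_bounded_interval_suffices
    {ι : Type*} [Fintype ι]
    (T D C : ι → ℚ)
    (hT : ∀ v, 0 < T v) (hD0 : ∀ v, 0 < D v) (hDT : ∀ v, D v ≤ T v)
    (hC : ∀ v, 0 ≤ C v)
    (U B L : ℚ)
    (hU : U = ∑ v, C v / T v)
    (hB : B = ∑ v, C v * (T v - D v) / T v)
    (hL : L = B / (1 - U))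
    (hU1 : U < 1)
    (htest : ∀ t : ℚ, 0 ≤ t → t ≤ L →
      (∑ v, ((max 0 ⌊(t - D v + T v) / T v⌋ : ℤ) : ℚ) * C v) ≤ t) :
    ∀ t : ℚ, 0 ≤ t →
      (∑ v, ((max 0 ⌊(t - D v + T v) / T v⌋ : ℤ) : ℚ) * C v) ≤ t := by
  intro t ht
  by_cases hcase : t ≤ L
  · exact htest t ht hcase
  push_neg at hcase
  -- linear bound: each term ≤ (C v / T v) * t + C v * (T v - D v) / T v
  have key : (∑ v, ((max 0 ⌊(t - D v + T v) / T v⌋ : ℤ) : ℚ) * C v)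
      ≤ U * t + B := by
    rw [hU, hB, sum_mul, ← sum_add_distrib]
    apply sum_le_sum
    intro v _
    have hTv := hT v
    have hx : (0:ℚ) ≤ (t - D v + T v) / T v := by
      apply div_nonneg _ hTv.le
      have := hDT v; linarith
    have hfl : ((max 0 ⌊(t - D v + T v) / T v⌋ : ℤ) : ℚ) ≤ (t - D v + T v) / T v := by
      rcases le_or_gt (⌊(t - D v + T v) / T v⌋ : ℤ) 0 with h | h
      · rw [max_eq_left h]; exact_mod_cast hx
      · rw [max_eq_right h.le]; exact Int.floor_le _
    calc ((max 0 ⌊(t - D v + T v) / T v⌋ : ℤ) : ℚ) * C v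
        ≤ (t - D v + T v) / T v * C v := mul_le_mul_of_nonneg_right hfl (hC v)
      _ = C v / T v * t + C v * (T v - D v) / T v := by field_simp; ring
  have h1U : (0:ℚ) < 1 - U := by linarith
  have hBle : B ≤ (1 - U) * t := by
    have : L ≤ t := hcase.le
    rw [hL, div_le_iff₀ h1U] at this
    linarith [this]
  linarith [key]
end

section
/- EDF sustainability with respect to earlier activations: if a set of independent jobs with arrival times a_i, absolute deadlines d_i, and execution times C_i is schedulable by preemptive EDF on one processor, then the job set obtained by decreasing some arrival times (a_i' ≤ a_i) while keeping the same absolute deadlines and execution times is also schedulable by EDF. -/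
open Finset
open scoped Classical

/-- EDF sustainability w.r.t. earlier activations. A finite job set is
EDF-schedulable on one processor iff it satisfies the processor demand criterion: for
every interval `[t₁,t₂]`, the total execution time of jobs with arrival `≥ t₁` and
deadline `≤ t₂` is at most `t₂ − t₁`. If the job set `(a, d, C)` satisfies the
criterion, then so does any job set `(a', d, C)` with earlier arrivals `a' ≤ a`
(same deadlines and execution times); hence it remains EDF-schedulable. -/
theorem edf_sustainable_earlier_arrivals
    {ι : Type*} [Fintype ι]
    (a a' d C : ι → ℝ)
    (hC : ∀ i, 0 ≤ C i)
    (hfeas : ∀ i, a i + C i ≤ d i)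
    (ha' : ∀ i, a' i ≤ a i)
    (hdemand : ∀ t₁ t₂ : ℝ, t₁ ≤ t₂ →
      (∑ i ∈ Finset.univ.filter (fun i => t₁ ≤ a i ∧ d i ≤ t₂), C i) ≤ t₂ - t₁) :
    ∀ t₁ t₂ : ℝ, t₁ ≤ t₂ →
      (∑ i ∈ Finset.univ.filter (fun i => t₁ ≤ a' i ∧ d i ≤ t₂), C i) ≤ t₂ - t₁ := by
  intro t₁ t₂ ht
  refine le_trans (Finset.sum_le_sum_of_subset_of_nonneg ?_ (fun i _ _ => hC i))
    (hdemand t₁ t₂ ht)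
  intro i hi
  simp only [Finset.mem_filter, Finset.mem_univ, true_and] at *
  exact ⟨hi.1.trans (ha' i), hi.2⟩
end

section
/- In a maximal sequential subset scheduled under EDF with immediate successor activation, two consecutive sub-tasks v1 → v2 (v1 an immediate predecessor of v2, both on the same engine, v2 activated immediately when v1 completes) cannot both preempt the same job J with absolute deadline no earlier than that of v2: if v1's job preempts J, then J does not resume before v2's job completes, so v2's job does not preempt J. -/
open Set

/-- Job `X` preempts job `J` at time `t`: `J` was executing immediately before `t`
(at instants arbitrarily close below `t`), `X` begins executing at `t`, and `X` has an
earlier absolute deadline than `J`. -/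
def Preempts {ι : Type*} (exec : ι → ℝ → Prop) (d : ι → ℝ) (X J : ι) (t : ℝ) : Prop :=
  exec X t ∧ d X < d J ∧ ∀ ε : ℝ, 0 < ε → ∃ s, t - ε < s ∧ s < t ∧ exec J s

/-- In a maximal sequential subset scheduled on a single engine under
preemptive EDF with immediate successor activation, two consecutive sub-tasks
`v₁ → v₂` (the job of `v₂` is released exactly at the completion of the job of `v₁`,
both on the same engine) cannot both preempt the same job `J` whose absolute deadline
is no earlier than `v₂`'s (here `d(v₂) ≥ d(J)` is false, i.e. `d v₂ < d J`): if `v₁`'s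
job preempts `J` (at some time `t₀`), then `J` never executes between the completion of
`v₁`'s job and the completion of `v₂`'s job, and `v₂`'s job never preempts `J`. -/
theorem consecutive_subtasks_cannot_both_preempt
    {ι : Type*} (exec : ι → ℝ → Prop) (r c d : ι → ℝ)
    (v₁ v₂ J : ι)
    -- jobs execute only within their release-completion window
    (hwin : ∀ i t, exec i t → r i ≤ t ∧ t < c i)
    -- EDF rule: a job cannot execute while a released, unfinished job with an
    -- earlier absolute deadline exists
    (hEDF : ∀ (i j : ι) (t : ℝ), exec i t → r j ≤ t → t < c j → d j < d i → False)
    -- v₂'s job is released exactly when v₁'s job completes, and completes later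
    (hrel : r v₂ = c v₁) (hcc : c v₁ ≤ c v₂)
    -- J's absolute deadline is no earlier than v₂'s: "d(v₂) ≥ d(J) is false"
    (hd2 : d v₂ < d J)
    -- v₁'s job preempted J at time t₀
    (t₀ : ℝ) (hr1 : r v₁ ≤ t₀) (hpre1 : Preempts exec d v₁ J t₀) :
    (∀ t, c v₁ ≤ t → t < c v₂ → ¬ exec J t) ∧ (∀ t, ¬ Preempts exec d v₂ J t) := by
  obtain ⟨hex1, hd1, _⟩ := hpre1
  have ht₀ : t₀ < c v₁ := (hwin v₁ t₀ hex1).2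
  have part1 : ∀ t, c v₁ ≤ t → t < c v₂ → ¬ exec J t := by
    intro t h1 h2 hJ
    exact hEDF J v₂ t hJ (hrel ▸ h1) h2 hd2
  refine ⟨part1, ?_⟩
  rintro t ⟨hex2, _, hclose⟩
  have hrt : c v₁ ≤ t := hrel ▸ (hwin v₂ t hex2).1
  have htc : t < c v₂ := (hwin v₂ t hex2).2
  rcases lt_or_eq_of_le hrt with h | h
  · obtain ⟨s, hs1, hs2, hsJ⟩ := hclose (t - c v₁) (by linarith)
    exact part1 s (by linarith) (by linarith) hsJ
  · obtain ⟨s, hs1, hs2, hsJ⟩ := hclose (t - t₀) (by linarith)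
    exact hEDF J v₁ s hsJ (by linarith) (by nlinarith [hs2, h]) hd1
end
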